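/- arXiv:1207.0287 — 8 statements merged into one kernel-verified Lean document; each statement's English description precedes it below -/
import Mathlib

section
/- Let p and q be odd prime numbers with q = p + 2. The equation w² + 2 + 2(p+q)z² + 2z⁴ = 0 has a solution (z, w) with z, w ∈ ℚ₂ if and only if p ≡ 5 (mod 8). -/
/-!
If `p ≡ 5 (mod 8)` then `q ≡ 7 (mod 8)`, so `-q ≡ 1 (mod 8)` is the square `t²` of a 2-adic
integer by Hensel's lemma, and `(z, w) = (1, 2t)` is a solution.

Conversely, `(z, w) ↦ (z⁻¹, w z⁻²)` maps solutions to solutions, so we may assume `‖z‖ ≤ 1`;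
the equation then forces `‖w‖ ≤ 1`. Reducing modulo `32`, the middle coefficient
`2(p + q) = 4(p + 1)` depends only on `p mod 8`, and a finite check shows that for odd `p`
there is a solution modulo `32` only when `p ≡ 5 (mod 8)`.
-/

theorem quartic_inv_eq {K : Type*} [Field K] (s w : K) {z : K} (hz : z ≠ 0) :
    (w * z⁻¹ ^ 2) ^ 2 + 2 + 2 * s * z⁻¹ ^ 2 + 2 * z⁻¹ ^ 4 =
      (w ^ 2 + 2 + 2 * s * z ^ 2 + 2 * z ^ 4) * z⁻¹ ^ 4 := by
  field_simp
  ring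

set_option maxRecDepth 10000 in
theorem mod_eight_eq_five_of_quartic_zmod_32 {p : ℕ} (hp : Odd p) {a b : ZMod 32}
    (h : b ^ 2 + 2 + 4 * ((p : ZMod 32) + 1) * a ^ 2 + 2 * a ^ 4 = 0) : p % 8 = 5 := by
  have hcheck : ∀ r : ℕ, r < 8 → r % 2 = 1 → ∀ a b : ZMod 32,
      b ^ 2 + 2 + 4 * ((r : ZMod 32) + 1) * a ^ 2 + 2 * a ^ 4 = 0 → r = 5 := by
    decide
  have hmod : 4 * ((p : ZMod 32) + 1) = 4 * (((p % 8 : ℕ) : ZMod 32) + 1) := by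
    conv_lhs => rw [← Nat.mod_add_div p 8]
    push_cast
    have h32 : (32 : ZMod 32) = 0 := rfl
    linear_combination ((p / 8 : ℕ) : ZMod 32) * h32
  rw [hmod] at h
  have hodd : p % 8 % 2 = 1 := by
    rw [Nat.mod_mod_of_dvd p (by norm_num)]
    exact Nat.odd_iff.mp hp
  exact hcheck _ (Nat.mod_lt _ (by norm_num)) hodd a b h

namespace PadicInt

variable {p : ℕ} [Fact p.Prime]

theorem exists_quartic_eq_zero_of_padic {s : ℤ_[p]} {z w : ℚ_[p]}
    (h : w ^ 2 + 2 + 2 * s * z ^ 2 + 2 * z ^ 4 = 0) :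
    ∃ a b : ℤ_[p], b ^ 2 + 2 + 2 * s * a ^ 2 + 2 * a ^ 4 = 0 := by
  wlog hz : ‖z‖ ≤ 1 generalizing z w
  · have hz0 : z ≠ 0 := by rintro rfl; simp at hz
    refine this (z := z⁻¹) (w := w * z⁻¹ ^ 2) ?_ ?_
    · rw [quartic_inv_eq _ _ hz0, h, zero_mul]
    · rw [norm_inv]
      exact inv_le_one_of_one_le₀ (not_le.mp hz).le
  set a : ℤ_[p] := ⟨z, hz⟩
  have hw2 : w ^ 2 = ((-(2 + 2 * s * a ^ 2 + 2 * a ^ 4) : ℤ_[p]) : ℚ_[p]) :=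
    calc w ^ 2 = -(2 + 2 * s * z ^ 2 + 2 * z ^ 4) := by linear_combination h
      _ = _ := rfl
  have hw : ‖w‖ ≤ 1 := by
    have : ‖w‖ ^ 2 ≤ 1 := by
      rw [← norm_pow, hw2]
      exact norm_le_one _
    exact (pow_le_one_iff_of_nonneg (norm_nonneg _) two_ne_zero).mp this
  exact ⟨a, ⟨w, hw⟩, coe_eq_zero.mp h⟩

theorem isSquare_intCast_of_modEq_one {m : ℤ} (hm : m ≡ 1 [ZMOD 8]) : IsSquare (m : ℤ_[2]) := by
  set F : Polynomial ℤ_[2] := Polynomial.X ^ 2 - Polynomial.C (m : ℤ_[2])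
  have hF : ‖F.eval 1‖ < ‖F.derivative.eval 1‖ ^ 2 := by
    have hval : F.eval 1 = ((1 - m : ℤ) : ℤ_[2]) := by simp [F]
    have hderiv : F.derivative.eval 1 = 2 := by simp [F]; norm_num
    have hnorm2 : ‖(2 : ℤ_[2])‖ = 2⁻¹ := by simpa using norm_p (p := 2)
    rw [hval, hderiv, hnorm2]
    calc ‖((1 - m : ℤ) : ℤ_[2])‖ ≤ ((2 : ℕ) : ℝ) ^ (-3 : ℤ) :=
          norm_int_le_pow_iff_dvd.mpr (by simpa using hm.dvd)
      _ < 2⁻¹ ^ 2 := by norm_num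
  obtain ⟨t, ht, -⟩ := hensels_lemma hF
  simp only [F, Polynomial.coe_aeval_eq_eval, Polynomial.eval_sub, Polynomial.eval_pow,
    Polynomial.eval_X, Polynomial.eval_C, sub_eq_zero] at ht
  exact ⟨t, by rw [← ht, sq]⟩

end PadicInt

theorem stmt_1_general (p q : ℕ) (hpo : Odd p) (hpq : q = p + 2) :
    (∃ z w : ℚ_[2], w ^ 2 + 2 + 2 * ((p : ℚ_[2]) + (q : ℚ_[2])) * z ^ 2 + 2 * z ^ 4 = 0) ↔
      p % 8 = 5 := by
  constructor
  · rintro ⟨z, w, h⟩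
    obtain ⟨a, b, hab⟩ :=
      PadicInt.exists_quartic_eq_zero_of_padic (s := ((p + q : ℕ) : ℤ_[2])) (by
        push_cast
        exact h)
    have hab32 := congrArg (PadicInt.toZModPow 5) hab
    simp only [map_add, map_mul, map_pow, map_ofNat, map_natCast, map_zero, hpq] at hab32
    push_cast at hab32
    exact mod_eight_eq_five_of_quartic_zmod_32 hpo (a := PadicInt.toZModPow 5 a)
      (b := PadicInt.toZModPow 5 b) (by linear_combination hab32)
  · intro h5
    obtain ⟨t, ht⟩ := PadicInt.isSquare_intCast_of_modEq_one (m := -(q : ℤ))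
      (by rw [Int.ModEq]; omega)
    have ht' : (t : ℚ_[2]) ^ 2 = -(q : ℚ_[2]) := by
      rw [sq, ← PadicInt.coe_mul, ← ht]
      push_cast
      ring
    refine ⟨1, 2 * t, ?_⟩
    rw [hpq] at ht' ⊢
    push_cast at ht' ⊢
    linear_combination 4 * ht'

/-- Let `p` and `q` be odd prime numbers with `q = p + 2`. The equation
`w² + 2 + 2(p+q)z² + 2z⁴ = 0` has a solution `(z, w)` with `z, w ∈ ℚ₂` if and only if
`p ≡ 5 (mod 8)`. -/
theorem stmt_1 (p q : ℕ) (hp : p.Prime) (hq : q.Prime) (hpo : Odd p) (hqo : Odd q)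
    (hpq : q = p + 2) :
    (∃ z w : ℚ_[2], w ^ 2 + 2 + 2 * ((p : ℚ_[2]) + (q : ℚ_[2])) * z ^ 2 + 2 * z ^ 4 = 0) ↔
      p % 8 = 5 :=
  stmt_1_general p q hpo hpq
end

section
/- Let p and q be odd prime numbers with q = p + 2, assume p ≡ 5 (mod 8) and that -7 is a quadratic non-residue modulo p. Let L be a field equipped with a ℚ_p-algebra structure and let α ∈ L satisfy α² = -7. Then there exist z, w ∈ L such that w² + 2 + 2(p+q)z² + 2z⁴ = 0. -/
/-!
The point has `z = 0`, so it suffices that `-2` is a square in `L`. As `α² = -7`, we have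
`-2 = 14 / α²`, and `14 = (-2)(-7)` is a square modulo `p`: both factors are non-residues,
`-2` because `p ≡ 5 (mod 8)`. Hensel's lemma lifts this square root of `14` to `ℚ_p ⊆ L`.
-/

open Polynomial

namespace PadicInt

variable {p : ℕ} [Fact p.Prime]

theorem norm_lt_one_iff_toZMod_eq_zero (x : ℤ_[p]) : ‖x‖ < 1 ↔ toZMod x = 0 := by
  rw [← RingHom.mem_ker, ker_toZMod, IsLocalRing.mem_maximalIdeal, mem_nonunits_iff,
    not_isUnit_iff]

theorem norm_eq_one_iff_toZMod_ne_zero (x : ℤ_[p]) : ‖x‖ = 1 ↔ toZMod x ≠ 0 := by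
  rw [ne_eq, ← norm_lt_one_iff_toZMod_eq_zero, not_lt]
  exact ⟨ge_of_eq, (norm_le_one x).antisymm⟩

theorem isSquare_of_isSquare_toZMod (hp : p ≠ 2) {x : ℤ_[p]} (hx : toZMod x ≠ 0)
    (hsq : IsSquare (toZMod x)) : IsSquare x := by
  obtain ⟨b, hb⟩ := hsq
  obtain ⟨a, rfl⟩ := ZMod.ringHom_surjective (toZMod : ℤ_[p] →+* ZMod p) b
  have h2 : (2 : ZMod p) ≠ 0 := Ring.two_ne_zero (by rwa [ZMod.ringChar_zmod_n])
  have hderiv : (X ^ 2 - C x : ℤ_[p][X]).derivative.aeval a = 2 * a := by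
    simp [one_add_one_eq_two]
  have hderiv_norm : ‖(X ^ 2 - C x : ℤ_[p][X]).derivative.aeval a‖ = 1 := by
    rw [hderiv, norm_eq_one_iff_toZMod_ne_zero, map_mul, map_ofNat]
    exact mul_ne_zero h2 (left_ne_zero_of_mul (hb ▸ hx))
  have hval : ‖(X ^ 2 - C x : ℤ_[p][X]).aeval a‖ < 1 := by
    rw [norm_lt_one_iff_toZMod_eq_zero]
    simp [hb, sq]
  obtain ⟨z, hz, -⟩ := hensels_lemma (F := X ^ 2 - C x) (a := a) (by rwa [hderiv_norm, one_pow])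
  exact ⟨z, by simpa [sub_eq_zero, sq, eq_comm] using hz⟩

end PadicInt

theorem Padic.isSquare_intCast_of_legendreSym_eq_one {p : ℕ} [Fact p.Prime] (hp : p ≠ 2)
    {a : ℤ} (ha : legendreSym p a = 1) : IsSquare (a : ℚ_[p]) := by
  have ha0 : (a : ZMod p) ≠ 0 := fun h => by simp [(legendreSym.eq_zero_iff p a).mpr h] at ha
  obtain ⟨t, ht⟩ := PadicInt.isSquare_of_isSquare_toZMod hp (x := a) (by simpa using ha0)
    (by simpa using (legendreSym.eq_one_iff p ha0).mp ha)
  exact ⟨t, by exact_mod_cast congrArg ((↑) : ℤ_[p] → ℚ_[p]) ht⟩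

theorem stmt_2_general (p q : ℕ) [Fact p.Prime] (hp5 : p % 8 = 5) (hnr : legendreSym p (-7) = -1)
    (L : Type*) [Field L] [Algebra ℚ_[p] L] (α : L) (hα : α ^ 2 = -7) :
    ∃ z w : L, w ^ 2 + 2 + 2 * ((p : L) + (q : L)) * z ^ 2 + 2 * z ^ 4 = 0 := by
  have hp2 : p ≠ 2 := by omega
  have hneg2 : legendreSym p (-2) = -1 := by
    rw [legendreSym.at_neg_two hp2, ZMod.χ₈'_nat_eq_if_mod_eight, if_neg (by omega),
      if_neg (by omega)]
  obtain ⟨s, hs⟩ : IsSquare ((-2 * -7 : ℤ) : ℚ_[p]) :=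
    Padic.isSquare_intCast_of_legendreSym_eq_one hp2 (by rw [legendreSym.mul, hneg2, hnr]; rfl)
  have : CharZero L := charZero_of_injective_algebraMap (algebraMap ℚ_[p] L).injective
  have hα0 : α ≠ 0 := by rintro rfl; norm_num at hα
  have hs' : algebraMap ℚ_[p] L s ^ 2 = 14 := by
    rw [sq, ← map_mul, ← hs]
    norm_num [map_ofNat]
  refine ⟨0, algebraMap ℚ_[p] L s / α, ?_⟩
  rw [div_pow, hs', hα]
  norm_num

/-- Let `p` and `q` be odd primes with `q = p + 2`, `p ≡ 5 (mod 8)` and `-7` a quadratic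
non-residue modulo `p`. Let `L` be a field which is a `ℚ_p`-algebra and `α ∈ L` with
`α² = -7`. Then there exist `z, w ∈ L` with `w² + 2 + 2(p+q)z² + 2z⁴ = 0`. -/
theorem stmt_2 (p q : ℕ) [Fact p.Prime] (hq : q.Prime) (hpo : Odd p) (hqo : Odd q)
    (hpq : q = p + 2) (hp5 : p % 8 = 5) (hnr : legendreSym p (-7) = -1)
    (L : Type*) [Field L] [Algebra ℚ_[p] L] (α : L) (hα : α ^ 2 = -7) :
    ∃ z w : L, w ^ 2 + 2 + 2 * ((p : L) + (q : L)) * z ^ 2 + 2 * z ^ 4 = 0 :=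
  stmt_2_general p q hp5 hnr L α hα
end

section
/- Let p and q be odd prime numbers with q = p + 2 such that the Legendre symbols satisfy (-7/p) = (-7/q) = -1. Let α ∈ ℚ₂ satisfy α² = -7 and have 2-adic valuation v₂(1+α) = 2, and set π = -(1+α)/2 (so v₂(π) = 1). Then there exist z, w ∈ ℚ₂ with w² = π - 2(p+q)z² + (4/π)z⁴ if and only if p ≡ 31 (mod 56). -/
/-!
By quadratic reciprocity `(-7/p) = (p/7)`, and `3` is the only `x ∈ 𝔽₇` with `x` and `x + 2`
both non-squares, so `p ≡ 3 (mod 7)`. It remains to show that the quartic has a `ℚ₂`-point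
iff `16 ∣ p + q`, i.e. `p ≡ 7 (mod 8)`.

Here `4/π = α - 1`, and both `π` and `α - 1` have valuation `1`. If `v(z) ≠ 0`, one of the two
outer terms strictly dominates, so the right-hand side has odd valuation and is not a square.
If `z` is a unit, then `z⁴ ≡ 1 (mod 16)` and `α ≡ 11 (mod 64)` give
`RHS/4 ≡ 1 - (p+q)/2 · z² (mod 8)`; a 2-adic number `≡ 1 (mod 2)` is a square iff it is
`≡ 1 (mod 8)` (Hensel), so a point exists iff `(p+q)/2 ≡ 0 (mod 8)`.
-/

open Padic IsUltrametricDist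

lemma legendreSym_neg_seven_eq_neg_one_iff {p : ℕ} [Fact p.Prime] (hp : p ≠ 2) :
    legendreSym p (-7) = -1 ↔ ¬IsSquare (p : ZMod 7) := by
  have := Fact.mk (by norm_num : Nat.Prime 7)
  have hp2 : p % 2 = 1 := (Fact.out : p.Prime).mod_two_eq_one_iff_ne_two.2 hp
  rw [← legendreSym.eq_neg_one_iff', legendreSym.quadratic_reciprocity' hp (by norm_num),
    show (-7 : ℤ) = -1 * 7 by norm_num, legendreSym.mul, legendreSym.at_neg_one hp,
    ZMod.χ₄_eq_neg_one_pow hp2, pow_mul]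
  rcases neg_one_pow_eq_or ℤ (p / 2) with h | h <;> simp [h]

lemma mod_seven_eq_three_of_not_isSquare {p : ℕ} (h₁ : ¬IsSquare (p : ZMod 7))
    (h₂ : ¬IsSquare ((p + 2 : ℕ) : ZMod 7)) : p % 7 = 3 := by
  have key : ∀ x : ZMod 7, ¬IsSquare x → ¬IsSquare (x + 2) → x = 3 := by decide
  rw [← ZMod.val_natCast, key _ h₁ (by exact_mod_cast h₂)]
  rfl

lemma isSquare_div_sq_iff {K : Type*} [Field K] {a b : K} (hb : b ≠ 0) :
    IsSquare (a / b ^ 2) ↔ IsSquare a :=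
  ⟨fun h => by simpa [hb] using h.mul (IsSquare.sq b), fun h => h.div (IsSquare.sq b)⟩

lemma norm_sub_le_iff_of_norm_le {E : Type*} [SeminormedAddCommGroup E] [IsUltrametricDist E]
    {x y : E} {r : ℝ} (hx : ‖x‖ ≤ r) : ‖x - y‖ ≤ r ↔ ‖y‖ ≤ r := by
  have sub_le {a b : E} (ha : ‖a‖ ≤ r) (hb : ‖b‖ ≤ r) : ‖a - b‖ ≤ r := by
    simpa [sub_eq_add_neg] using (norm_add_le_max a (-b)).trans (max_le ha (by rwa [norm_neg]))
  exact ⟨fun h => sub_sub_cancel x y ▸ sub_le hx h, sub_le hx⟩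

namespace Padic

variable {p : ℕ} [Fact p.Prime]

lemma norm_le_inv_of_norm_lt_one {x : ℚ_[p]} (hx : ‖x‖ < 1) : ‖x‖ ≤ (p : ℝ)⁻¹ := by
  simpa using (norm_le_pow_iff_norm_lt_pow_add_one x (-1)).2 (by simpa using hx)

lemma not_isSquare_of_norm_eq_inv {x : ℚ_[p]} (hx : ‖x‖ = (p : ℝ)⁻¹) : ¬IsSquare x := by
  rintro ⟨y, rfl⟩
  have hp : (1 : ℝ) < p := mod_cast (Fact.out : p.Prime).one_lt
  have hy : y ≠ 0 := by rintro rfl; simp at hx; linarith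
  rw [norm_mul, norm_eq_zpow_neg_valuation hy, ← zpow_add₀ (by positivity), ← zpow_neg_one] at hx
  have := zpow_right_injective₀ (by positivity) hp.ne' hx
  omega

lemma not_isSquare_add_mul_sq_add_mul_pow_four {a b c t : ℚ_[p]} (ha : ‖a‖ = (p : ℝ)⁻¹)
    (hb : ‖b‖ ≤ 1) (hc : ‖c‖ ≤ 1) (ht : ‖t‖ < 1) : ¬IsSquare (a + b * t ^ 2 + c * t ^ 4) := by
  have hp : (1 : ℝ) < p := mod_cast (Fact.out : p.Prime).one_lt
  have ht2 : ‖t‖ ^ 2 < (p : ℝ)⁻¹ :=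
    calc ‖t‖ ^ 2 ≤ ‖t‖ * (p : ℝ)⁻¹ := by rw [sq]; gcongr; exact norm_le_inv_of_norm_lt_one ht
      _ < (p : ℝ)⁻¹ := mul_lt_of_lt_one_left (by positivity) ht
  have hrest : ‖b * t ^ 2 + c * t ^ 4‖ < ‖a‖ := by
    refine ha ▸ (norm_add_le_max _ _).trans_lt (max_lt ?_ ?_) <;> rw [norm_mul, norm_pow]
    · exact (mul_le_of_le_one_left (by positivity) hb).trans_lt ht2
    · calc ‖c‖ * ‖t‖ ^ 4 ≤ ‖t‖ ^ 2 * ‖t‖ ^ 2 := by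
            rw [← pow_add]; exact mul_le_of_le_one_left (by positivity) hc
        _ ≤ ‖t‖ ^ 2 := mul_le_of_le_one_right (by positivity) (pow_le_one₀ (norm_nonneg t) ht.le)
        _ < _ := ht2
  apply not_isSquare_of_norm_eq_inv
  rw [add_assoc, norm_add_eq_max_of_norm_ne_norm hrest.ne', max_eq_left hrest.le, ha]

lemma norm_pow_sub_one_le_of_forall_isUnit {n k : ℕ}
    (h : ∀ u : ZMod (p ^ k), IsUnit u → u ^ n = 1) {x : ℚ_[p]} (hx : ‖x‖ = 1) :
    ‖x ^ n - 1‖ ≤ (p : ℝ) ^ (-k : ℤ) := by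
  obtain ⟨x, rfl⟩ : ∃ y : ℤ_[p], (y : ℚ_[p]) = x := ⟨⟨x, hx.le⟩, rfl⟩
  have hker : x ^ n - 1 ∈ RingHom.ker (PadicInt.toZModPow (p := p) k) := by
    rw [RingHom.mem_ker, map_sub, map_pow, map_one,
      h _ ((PadicInt.isUnit_iff.2 hx).map _), sub_self]
  rw [PadicInt.ker_toZModPow, ← PadicInt.norm_le_pow_iff_mem_span_pow] at hker
  exact_mod_cast hker

lemma norm_two : ‖(2 : ℚ_[2])‖ = 2⁻¹ := by simpa using norm_p (p := 2)

lemma norm_ten : ‖(10 : ℚ_[2])‖ = 2⁻¹ := by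
  rw [show (10 : ℚ_[2]) = 2 * (5 : ℕ) by norm_num, norm_mul, norm_two,
    norm_natCast_eq_one_iff.2 (by norm_num), mul_one]

open Polynomial in
lemma isSquare_of_norm_sub_one_le {c : ℚ_[2]} (hc : ‖c - 1‖ ≤ 8⁻¹) : IsSquare c := by
  have hc1 : ‖c‖ ≤ 1 := by
    simpa using (norm_add_le_max (c - 1) 1).trans (max_le (hc.trans (by norm_num)) (by simp))
  obtain ⟨C, rfl⟩ : ∃ C : ℤ_[2], (C : ℚ_[2]) = c := ⟨⟨c, hc1⟩, rfl⟩
  have hF : ‖(X ^ 2 - Polynomial.C C).aeval (1 : ℤ_[2])‖ <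
      ‖(derivative (X ^ 2 - Polynomial.C C)).aeval (1 : ℤ_[2])‖ ^ 2 := by
    have h2 : ‖(2 : ℤ_[2])‖ = 2⁻¹ := by simpa using PadicInt.norm_p (p := 2)
    have h1C : ‖(1 : ℤ_[2]) - C‖ = ‖(C : ℚ_[2]) - 1‖ := by
      rw [← norm_neg, neg_sub, PadicInt.norm_def]; push_cast; rfl
    simp only [map_sub, map_pow, aeval_X, aeval_C, derivative_X_pow,
      derivative_C, one_pow, Algebra.algebraMap_self, RingHom.id_apply, h1C]
    norm_num [h2]
    linarith
  obtain ⟨r, hr, -⟩ := hensels_lemma hF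
  refine ⟨r, ?_⟩
  simp only [map_sub, map_pow, aeval_X, aeval_C, Algebra.algebraMap_self, RingHom.id_apply,
    sub_eq_zero] at hr
  rw [← hr]; push_cast; ring

lemma isSquare_iff_norm_sub_one_le {u : ℚ_[2]} (hu : ‖u - 1‖ < 1) :
    IsSquare u ↔ ‖u - 1‖ ≤ 8⁻¹ := by
  refine ⟨?_, isSquare_of_norm_sub_one_le⟩
  rintro ⟨y, rfl⟩
  have hy : ‖y‖ = 1 := by
    have := norm_eq_of_norm_sub_lt_right (z2 := 1) (by simpa using hu)
    rw [norm_mul, norm_one] at this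
    nlinarith [norm_nonneg y]
  rw [← sq]
  exact (norm_pow_sub_one_le_of_forall_isUnit (k := 3) (by decide) hy).trans_eq (by norm_num)

end Padic

noncomputable def quartic (π s z : ℚ_[2]) : ℚ_[2] := π - 2 * s * z ^ 2 + 4 / π * z ^ 4

namespace SqrtNegSeven

variable {α : ℚ_[2]}

lemma four_div_neg_one_add_div_two (hα : α ^ 2 = -7) : 4 / (-(1 + α) / 2) = α - 1 := by
  have h : 1 + α ≠ 0 := fun h => by
    rw [show α = -1 by linear_combination h] at hα; norm_num at hα
  field_simp
  linear_combination -hα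

lemma norm_neg_one_add_div_two (h1α : ‖1 + α‖ = 4⁻¹) : ‖-(1 + α) / 2‖ = 2⁻¹ := by
  rw [norm_div, norm_neg, h1α, Padic.norm_two]; norm_num

lemma norm_sub_one_eq (h1α : ‖1 + α‖ = 4⁻¹) : ‖α - 1‖ = 2⁻¹ := by
  have h2 : ‖(-2 : ℚ_[2])‖ = 2⁻¹ := by rw [norm_neg, Padic.norm_two]
  rw [show α - 1 = (1 + α) + -2 by ring,
    norm_add_eq_max_of_norm_ne_norm (by rw [h1α, h2]; norm_num), h1α, h2]
  norm_num

lemma norm_sub_eleven_eq (hα : α ^ 2 = -7) (h1α : ‖1 + α‖ = 4⁻¹) : ‖α - 11‖ = 64⁻¹ := by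
  have h11 : ‖α + 11‖ = 2⁻¹ := by
    rw [show α + 11 = (1 + α) + 10 by ring,
      norm_add_eq_max_of_norm_ne_norm (by rw [h1α, Padic.norm_ten]; norm_num), h1α, Padic.norm_ten]
    norm_num
  have hprod : ‖α - 11‖ * ‖α + 11‖ = 128⁻¹ := by
    rw [← norm_mul, show (α - 11) * (α + 11) = -2 ^ 7 by linear_combination hα, norm_neg,
      norm_pow, Padic.norm_two]
    norm_num
  rw [h11] at hprod
  linarith

lemma not_isSquare_quartic_of_norm_ne_one (hα : α ^ 2 = -7) (h1α : ‖1 + α‖ = 4⁻¹) {s z : ℚ_[2]}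
    (hs : ‖s‖ ≤ 1) (hz : ‖z‖ ≠ 1) : ¬IsSquare (quartic (-(1 + α) / 2) s z) := by
  have hπ := norm_neg_one_add_div_two h1α
  have hα1 := norm_sub_one_eq h1α
  have h2s : ‖-2 * s‖ ≤ 1 := by
    rw [norm_mul, norm_neg, Padic.norm_two]; linarith [norm_nonneg s]
  rw [quartic, four_div_neg_one_add_div_two hα]
  rcases hz.lt_or_gt with hz | hz
  · have := Padic.not_isSquare_add_mul_sq_add_mul_pow_four
      (by rw [hπ]; norm_num : ‖-(1 + α) / 2‖ = ((2 : ℕ) : ℝ)⁻¹) h2s (by rw [hα1]; norm_num) hz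
    rwa [neg_mul, neg_mul, ← sub_eq_add_neg] at this
  · -- dividing by `z⁴` swaps the roles of `π` and `α - 1`
    have hz0 : z ≠ 0 := norm_pos_iff.1 (one_pos.trans hz)
    have := Padic.not_isSquare_add_mul_sq_add_mul_pow_four
      (by rw [hα1]; norm_num : ‖α - 1‖ = ((2 : ℕ) : ℝ)⁻¹) h2s (by rw [hπ]; norm_num)
      (t := z⁻¹) (by rw [norm_inv]; exact inv_lt_one_of_one_lt₀ hz)
    rwa [← isSquare_div_sq_iff (pow_ne_zero 2 hz0), show
      (-(1 + α) / 2 - 2 * s * z ^ 2 + (α - 1) * z ^ 4) / (z ^ 2) ^ 2 =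
        α - 1 + -2 * s * z⁻¹ ^ 2 + -(1 + α) / 2 * z⁻¹ ^ 4 by field_simp; ring]

lemma isSquare_quartic_iff_of_norm_eq_one (hα : α ^ 2 = -7) (h1α : ‖1 + α‖ = 4⁻¹) {s z : ℚ_[2]}
    (hs : ‖s‖ ≤ 4⁻¹) (hz : ‖z‖ = 1) :
    IsSquare (quartic (-(1 + α) / 2) s z) ↔ ‖s‖ ≤ 16⁻¹ := by
  have hz4 : ‖z ^ 4 - 1‖ ≤ 16⁻¹ :=
    (Padic.norm_pow_sub_one_le_of_forall_isUnit (k := 4) (by decide) hz).trans_eq (by norm_num)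
  set e := (α - 11) / 8 + (α - 1) / 4 * (z ^ 4 - 1)
  have he : ‖e‖ ≤ 8⁻¹ := by
    have h8 : ‖(8 : ℚ_[2])‖ = 8⁻¹ := by
      rw [show (8 : ℚ_[2]) = 2 ^ 3 by norm_num, norm_pow, Padic.norm_two]; norm_num
    have h4 : ‖(4 : ℚ_[2])‖ = 4⁻¹ := by
      rw [show (4 : ℚ_[2]) = 2 ^ 2 by norm_num, norm_pow, Padic.norm_two]; norm_num
    refine (norm_add_le_max _ _).trans (max_le ?_ ?_)
    · rw [norm_div, norm_sub_eleven_eq hα h1α, h8]; norm_num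
    · rw [norm_mul, norm_div, norm_sub_one_eq h1α, h4]; nlinarith [norm_nonneg (z ^ 4 - 1)]
  have hsz : ‖s / 2 * z ^ 2‖ = 2 * ‖s‖ := by
    rw [norm_mul, norm_div, norm_pow, hz, Padic.norm_two]; ring
  have hu : quartic (-(1 + α) / 2) s z / 2 ^ 2 - 1 = e - s / 2 * z ^ 2 := by
    rw [quartic, four_div_neg_one_add_div_two hα]; ring
  rw [← isSquare_div_sq_iff (two_ne_zero' ℚ_[2]), Padic.isSquare_iff_norm_sub_one_le, hu,
    norm_sub_le_iff_of_norm_le he, hsz]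
  · constructor <;> intro <;> linarith
  · rw [hu]
    refine lt_of_le_of_lt ?_ (by norm_num : (2⁻¹ : ℝ) < 1)
    exact (norm_sub_le_iff_of_norm_le (he.trans (by norm_num))).2 (by rw [hsz]; linarith)

theorem exists_sq_eq_quartic_iff (hα : α ^ 2 = -7) (h1α : ‖1 + α‖ = 4⁻¹) {s : ℚ_[2]}
    (hs : ‖s‖ ≤ 4⁻¹) :
    (∃ z w : ℚ_[2], w ^ 2 = quartic (-(1 + α) / 2) s z) ↔ ‖s‖ ≤ 16⁻¹ := by
  constructor
  · rintro ⟨z, w, hw⟩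
    have hsq : IsSquare (quartic (-(1 + α) / 2) s z) := ⟨w, by rw [← hw, sq]⟩
    have hz : ‖z‖ = 1 := by
      by_contra hz
      exact not_isSquare_quartic_of_norm_ne_one hα h1α (hs.trans (by norm_num)) hz hsq
    exact (isSquare_quartic_iff_of_norm_eq_one hα h1α hs hz).1 hsq
  · intro h
    obtain ⟨w, hw⟩ := (isSquare_quartic_iff_of_norm_eq_one hα h1α hs (z := 1) (by simp)).2 h
    exact ⟨1, w, by rw [sq, hw]⟩

end SqrtNegSeven

/-- Let `p` and `q` be odd primes with `q = p + 2` and `(-7/p) = (-7/q) = -1`. Let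
`α ∈ ℚ₂` with `α² = -7` and `v₂(1+α) = 2`, and set `π = -(1+α)/2`. Then there exist
`z, w ∈ ℚ₂` with `w² = π - 2(p+q)z² + (4/π)z⁴` if and only if `p ≡ 31 (mod 56)`. -/
theorem stmt_4 (p q : ℕ) [Fact p.Prime] [Fact q.Prime] (hpo : Odd p) (hqo : Odd q)
    (hpq : q = p + 2) (hA : legendreSym p (-7) = -1 ∧ legendreSym q (-7) = -1)
    (α : ℚ_[2]) (hα : α ^ 2 = -7) (hval : (1 + α).valuation = 2)
    (π : ℚ_[2]) (hπ : π = -(1 + α) / 2) :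
    (∃ z w : ℚ_[2],
        w ^ 2 = π - 2 * ((p : ℚ_[2]) + (q : ℚ_[2])) * z ^ 2 + (4 / π) * z ^ 4) ↔
      p % 56 = 31 := by
  have hp7 : p % 7 = 3 := by
    refine mod_seven_eq_three_of_not_isSquare ?_ (hpq ▸ ?_)
    · exact (legendreSym_neg_seven_eq_neg_one_iff (by rintro rfl; norm_num at hpo)).1 hA.1
    · exact (legendreSym_neg_seven_eq_neg_one_iff (by rintro rfl; norm_num at hqo)).1 hA.2
  have h1α : ‖1 + α‖ = 4⁻¹ := by
    have h0 : 1 + α ≠ 0 := fun h => by simp [h] at hval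
    rw [norm_eq_zpow_neg_valuation h0, hval]; norm_num
  have hnorm (k : ℕ) : ‖(p : ℚ_[2]) + q‖ ≤ ((2 : ℝ) ^ k)⁻¹ ↔ 2 ^ k ∣ p + q := by
    have := Padic.norm_int_le_pow_iff_dvd (p := 2) (p + q : ℕ) k
    rw [zpow_neg, zpow_natCast] at this
    exact_mod_cast this
  have hs : ‖(p : ℚ_[2]) + q‖ ≤ 4⁻¹ := by
    rw [show (4⁻¹ : ℝ) = (2 ^ 2)⁻¹ by norm_num, hnorm]
    obtain ⟨k, rfl⟩ := hpo; subst hpq; omega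
  subst hπ
  change (∃ z w : ℚ_[2], w ^ 2 = quartic _ _ z) ↔ _
  rw [SqrtNegSeven.exists_sq_eq_quartic_iff hα h1α hs, show (16⁻¹ : ℝ) = (2 ^ 4)⁻¹ by norm_num,
    hnorm]
  omega
end

section
/- Let p and q be odd prime numbers with q = p + 2 such that the Legendre symbols satisfy (-7/p) = (-7/q) = -1, and assume p ≡ 17 or 31 (mod 56). Let L be a field equipped with a ℚ_p-algebra structure, let α ∈ L satisfy α² = -7, and set π = -(1+α)/2. Then there exist z, w ∈ L such that w² = π - 2(p+q)z² + (4/π)z⁴. -/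
/-!
Taking `z = 0`, it suffices that `π` is a square in `L`, and this already happens in `ℚ_p`
adjoined `α`. If `V ∈ ℤ_p` satisfies `(V² + 1)² = 8`, then `((V² - α) / (2V))² = π`. Such a `V`
comes from Hensel's lemma: `p ≡ ±1 (mod 8)` makes `2 = s²` in `ℤ_p`, and since
`(-1 + 2s)(-1 - 2s) = -7` is not a square mod `p`, one of the two factors is a square mod `p`,
hence in `ℤ_p`; its square root is `V`.
-/

open Polynomial

theorem isSquare_or_isSquare_of_not_isSquare_mul {F : Type*} [Field F] [Fintype F] {a b : F}
    (h : ¬IsSquare (a * b)) : IsSquare a ∨ IsSquare b := by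
  classical
  by_contra! hab
  have hab0 : a * b ≠ 0 := fun h0 => h (h0 ▸ IsSquare.zero)
  refine h ((quadraticChar_one_iff_isSquare hab0).mp ?_)
  rw [map_mul, quadraticChar_neg_one_iff_not_isSquare.mpr hab.1,
    quadraticChar_neg_one_iff_not_isSquare.mpr hab.2]
  norm_num

namespace PadicInt

variable {p : ℕ} [Fact p.Prime]

theorem exists_sq_add_one_sq_eq_eight (hp : p ≠ 2) (h8 : p % 8 = 1 ∨ p % 8 = 7)
    (h7 : ¬IsSquare (-7 : ZMod p)) : ∃ V : ℤ_[p], (V ^ 2 + 1) ^ 2 = 8 := by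
  have h2 : (2 : ZMod p) ≠ 0 := Ring.two_ne_zero ((ZMod.ringChar_zmod_n p).substr hp)
  obtain ⟨s, hs⟩ : IsSquare (2 : ℤ_[p]) :=
    isSquare_of_isSquare_toZMod hp (by rwa [map_ofNat])
      (by rwa [map_ofNat, ZMod.exists_sq_eq_two_iff hp])
  have hprod : toZMod (-1 + 2 * s) * toZMod (-1 - 2 * s) = -7 := by
    have hs' : toZMod s * toZMod s = 2 := by rw [← map_mul, ← hs, map_ofNat]
    simp only [map_add, map_sub, map_neg, map_one, map_mul, map_ofNat]
    linear_combination (-4 : ZMod p) * hs'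
  have hprod0 : toZMod (-1 + 2 * s) * toZMod (-1 - 2 * s) ≠ 0 :=
    fun h0 => h7 (hprod ▸ h0 ▸ IsSquare.zero)
  rcases isSquare_or_isSquare_of_not_isSquare_mul (hprod ▸ h7) with h | h
  · obtain ⟨V, hV⟩ := isSquare_of_isSquare_toZMod hp (left_ne_zero_of_mul hprod0) h
    exact ⟨V, by linear_combination -(V ^ 2 + 1 + 2 * s) * hV - 4 * hs⟩
  · obtain ⟨V, hV⟩ := isSquare_of_isSquare_toZMod hp (right_ne_zero_of_mul hprod0) h
    exact ⟨V, by linear_combination -(V ^ 2 + 1 - 2 * s) * hV - 4 * hs⟩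

end PadicInt

theorem sq_div_eq_of_sq_add_one_sq_eq_eight {L : Type*} [Field L] [NeZero (2 : L)] {α V : L}
    (hα : α ^ 2 = -7) (hV : (V ^ 2 + 1) ^ 2 = 8) (hV0 : V ≠ 0) :
    ((V ^ 2 - α) / (2 * V)) ^ 2 = -(1 + α) / 2 := by
  field_simp
  linear_combination hα + hV

theorem stmt_5_general (p q : ℕ) [Fact p.Prime] [Fact q.Prime]
    (hA : legendreSym p (-7) = -1 ∧ legendreSym q (-7) = -1)
    (hmod : p % 56 = 17 ∨ p % 56 = 31)
    (L : Type*) [Field L] [Algebra ℚ_[p] L] (α : L) (hα : α ^ 2 = -7)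
    (π : L) (hπ : π = -(1 + α) / 2) :
    ∃ z w : L, w ^ 2 = π - 2 * ((p : L) + (q : L)) * z ^ 2 + (4 / π) * z ^ 4 := by
  have h7 : ¬IsSquare (-7 : ZMod p) := by exact_mod_cast (legendreSym.eq_neg_one_iff p).mp hA.1
  obtain ⟨V, hV⟩ := PadicInt.exists_sq_add_one_sq_eq_eight (by omega) (by omega) h7
  have : CharZero L := charZero_of_injective_algebraMap (algebraMap ℚ_[p] L).injective
  set v : L := (algebraMap ℚ_[p] L).comp PadicInt.Coe.ringHom V
  have hv : (v ^ 2 + 1) ^ 2 = 8 := by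
    simpa only [map_pow, map_add, map_one, map_ofNat] using
      congrArg ((algebraMap ℚ_[p] L).comp PadicInt.Coe.ringHom) hV
  have hv0 : v ≠ 0 := fun h0 => by norm_num [h0] at hv
  refine ⟨0, (v ^ 2 - α) / (2 * v), ?_⟩
  rw [sq_div_eq_of_sq_add_one_sq_eq_eight hα hv hv0, hπ]
  ring

/-- Let `p` and `q` be odd primes with `q = p + 2`, `(-7/p) = (-7/q) = -1`, and
`p ≡ 17` or `31 (mod 56)`. Let `L` be a field which is a `ℚ_p`-algebra, `α ∈ L` with
`α² = -7`, and set `π = -(1+α)/2`. Then there exist `z, w ∈ L` with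
`w² = π - 2(p+q)z² + (4/π)z⁴`. -/
theorem stmt_5 (p q : ℕ) [Fact p.Prime] [Fact q.Prime] (hpo : Odd p) (hqo : Odd q)
    (hpq : q = p + 2) (hA : legendreSym p (-7) = -1 ∧ legendreSym q (-7) = -1)
    (hmod : p % 56 = 17 ∨ p % 56 = 31)
    (L : Type*) [Field L] [Algebra ℚ_[p] L] (α : L) (hα : α ^ 2 = -7)
    (π : L) (hπ : π = -(1 + α) / 2) :
    ∃ z w : L, w ^ 2 = π - 2 * ((p : L) + (q : L)) * z ^ 2 + (4 / π) * z ^ 4 :=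
  stmt_5_general p q hA hmod L α hα π hπ
end

section
/- Let D be one of -11, -19, -43, -67, -163, and let p and q be odd prime numbers with q = p + 2 such that the Legendre symbols satisfy (D/p) = (D/q) = -1. Let L be a field equipped with a ℚ_p-algebra structure and let α ∈ L satisfy α² = D. Then there exist z, w ∈ L with w² = 2 - 2(p+q)z² + 2z⁴. -/
/-!
Taking `z = 0`, it suffices that `2` is a square in `L`. Since `(D/p) = -1`, the field
`ℚ_p(√D)` is the unramified quadratic extension of `ℚ_p`, in which every `p`-adic unit is a
square: by Hensel's lemma either `u` or `u D` is a square in `ℚ_p`, and in the second case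
`√(u D) · α / D` is a square root of `u`.
-/

theorem legendreSym.prime_ne_two_of_eq_neg_one {p : ℕ} [Fact p.Prime] {a : ℤ}
    (h : legendreSym p a = -1) : p ≠ 2 := by
  rintro rfl
  rw [legendreSym.eq_neg_one_iff] at h
  exact h ⟨_, (ZMod.pow_card _).symm.trans (sq _)⟩

theorem ZMod.two_ne_zero_of_prime_ne_two {p : ℕ} [Fact p.Prime] (hp : p ≠ 2) :
    (2 : ZMod p) ≠ 0 :=
  Ring.two_ne_zero (by rwa [ZMod.ringChar_zmod_n])

open Polynomial in
theorem Padic.isSquare_intCast_of_isSquare_zmod {p : ℕ} [Fact p.Prime] (hp : p ≠ 2) {u : ℤ}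
    (hu : (u : ZMod p) ≠ 0) (h : IsSquare (u : ZMod p)) : IsSquare (u : ℚ_[p]) := by
  obtain ⟨r, hr⟩ := h
  obtain ⟨a, rfl⟩ := ZMod.intCast_surjective r
  have hroot : (p : ℤ) ∣ a ^ 2 - u := by
    rw [← ZMod.intCast_zmod_eq_zero_iff_dvd]
    push_cast
    rw [hr]
    ring
  have hderiv : ¬ (p : ℤ) ∣ 2 * a := by
    rw [← ZMod.intCast_zmod_eq_zero_iff_dvd]
    push_cast
    refine mul_ne_zero (ZMod.two_ne_zero_of_prime_ne_two hp) ?_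
    rintro ha
    exact hu (by rw [hr, ha, zero_mul])
  set F : ℤ[X] := X ^ 2 - C u
  have hnorm : ‖F.aeval (a : ℤ_[p])‖ < ‖F.derivative.aeval (a : ℤ_[p])‖ ^ 2 := by
    have hF : F.aeval (a : ℤ_[p]) = ((a ^ 2 - u : ℤ) : ℤ_[p]) := by simp [F]
    have hF' : F.derivative.aeval (a : ℤ_[p]) = ((2 * a : ℤ) : ℤ_[p]) := by
      simp [F, map_ofNat]
    have hunit : ‖((2 * a : ℤ) : ℤ_[p])‖ = 1 :=
      (PadicInt.norm_le_one _).lt_or_eq.resolve_left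
        (by rwa [PadicInt.norm_intCast_lt_one_iff])
    rw [hF, hF', hunit, one_pow, PadicInt.norm_intCast_lt_one_iff]
    exact hroot
  obtain ⟨z, hz, -⟩ := hensels_lemma hnorm
  refine ⟨z, ?_⟩
  have hz' : z * z = (u : ℤ_[p]) := by simpa [F, sq, sub_eq_zero] using hz
  rw [← PadicInt.coe_intCast, ← hz', PadicInt.coe_mul]

theorem isSquare_intCast_of_legendreSym_eq_neg_one {p : ℕ} [Fact p.Prime]
    {L : Type*} [CommRing L] [Algebra ℚ_[p] L] {D : ℤ} (hD : legendreSym p D = -1) {α : L}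
    (hα : α ^ 2 = D) {u : ℤ} (hu : (u : ZMod p) ≠ 0) : IsSquare (u : L) := by
  have hp : p ≠ 2 := legendreSym.prime_ne_two_of_eq_neg_one hD
  by_cases hsq : IsSquare (u : ZMod p)
  · obtain ⟨x, hx⟩ := Padic.isSquare_intCast_of_isSquare_zmod hp hu hsq
    exact ⟨algebraMap ℚ_[p] L x, by rw [← map_mul, ← hx, map_intCast]⟩
  have hD0 : (D : ZMod p) ≠ 0 := by
    rw [Ne, ← legendreSym.eq_zero_iff, hD]
    norm_num
  have huD : legendreSym p (u * D) = 1 := by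
    rw [legendreSym.mul, (legendreSym.eq_neg_one_iff p).2 hsq, hD]
    norm_num
  have huD0 : ((u * D : ℤ) : ZMod p) ≠ 0 := by
    push_cast
    exact mul_ne_zero hu hD0
  obtain ⟨x, hx⟩ := Padic.isSquare_intCast_of_isSquare_zmod hp huD0
    ((legendreSym.eq_one_iff p huD0).1 huD)
  have hDQ : (D : ℚ_[p]) ≠ 0 := Int.cast_ne_zero.2 (by rintro rfl; exact hD0 Int.cast_zero)
  refine ⟨algebraMap ℚ_[p] L (x / D) * α, ?_⟩
  have hxD : (u : ℚ_[p]) = x / D * (x / D) * D := by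
    field_simp
    push_cast at hx
    linear_combination hx
  calc (u : L) = algebraMap ℚ_[p] L (x / D * (x / D) * D) := by rw [← hxD, map_intCast]
    _ = _ := by
        rw [map_mul, map_mul, map_intCast, ← hα]
        ring

theorem stmt_8_general (D : ℤ)
    (p q : ℕ) [Fact p.Prime] [Fact q.Prime] (hB : legendreSym p D = -1 ∧ legendreSym q D = -1)
    (L : Type*) [Field L] [Algebra ℚ_[p] L] (α : L) (hα : α ^ 2 = (D : L)) :
    ∃ z w : L, w ^ 2 = 2 - 2 * ((p : L) + (q : L)) * z ^ 2 + 2 * z ^ 4 := by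
  have hp : p ≠ 2 := legendreSym.prime_ne_two_of_eq_neg_one hB.1
  obtain ⟨w, hw⟩ := isSquare_intCast_of_legendreSym_eq_neg_one hB.1 hα (u := 2)
    (by exact_mod_cast ZMod.two_ne_zero_of_prime_ne_two hp)
  exact ⟨0, w, by push_cast at hw; rw [sq, ← hw]; ring⟩

/-- Let `D ∈ {-11, -19, -43, -67, -163}` and let `p, q` be odd primes with `q = p + 2` and
`(D/p) = (D/q) = -1`. Let `L` be a field which is a `ℚ_p`-algebra and `α ∈ L` with
`α² = D`. Then there exist `z, w ∈ L` with `w² = 2 - 2(p+q)z² + 2z⁴`. -/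
theorem stmt_8 (D : ℤ) (hD : D = -11 ∨ D = -19 ∨ D = -43 ∨ D = -67 ∨ D = -163)
    (p q : ℕ) [Fact p.Prime] [Fact q.Prime] (hpo : Odd p) (hqo : Odd q)
    (hpq : q = p + 2) (hB : legendreSym p D = -1 ∧ legendreSym q D = -1)
    (L : Type*) [Field L] [Algebra ℚ_[p] L] (α : L) (hα : α ^ 2 = (D : L)) :
    ∃ z w : L, w ^ 2 = 2 - 2 * ((p : L) + (q : L)) * z ^ 2 + 2 * z ^ 4 :=
  stmt_8_general D p q hB L α hα
end

section
/- Let p and q be odd prime numbers with q = p + 2 and p ≡ 5 (mod 8). Let L be a field equipped with a ℚ₂-algebra structure such that L has dimension 2 as a ℚ₂-vector space, and let α ∈ L satisfy α² = -2. Then there are no z, w ∈ L with w² + 1 - (p+q)z² + z⁴ = 0. -/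
/-! With `α² = -2`, the field `L` is `ℚ₂(α)` and `ℤ₂ + ℤ₂α` is a valuation ring of it, because
`‖a² + 2b²‖ = max ‖a‖² (‖b‖² / 2)` in `ℚ₂`. The symmetry `(z, w) ↦ (z⁻¹, w z⁻²)` of the curve
therefore lets us assume `z ∈ ℤ₂ + ℤ₂α`, and then the equation forces `w ∈ ℤ₂ + ℤ₂α` as well.
Comparing coordinates in the basis `1, α` leaves two polynomial equations over `ℤ₂` in which
`p + q` enters only through `p + q ≡ 12 (mod 16)`, and these have no solution modulo `16`. -/

@[simp, norm_cast]
lemma PadicInt.coe_ofNat {p : ℕ} [Fact p.Prime] (n : ℕ) [n.AtLeastTwo] :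
    ((no_index (OfNat.ofNat n) : ℤ_[p]) : ℚ_[p]) = OfNat.ofNat n :=
  rfl

lemma Padic.norm_two_s10 : ‖(2 : ℚ_[2])‖ = 2⁻¹ := by
  simpa using Padic.norm_p (p := 2)

lemma Padic.norm_sq_add_mul_sq {e : ℚ_[2]} (he : ‖e‖ = 2⁻¹) (x y : ℚ_[2]) :
    ‖x ^ 2 + e * y ^ 2‖ = max (‖x‖ ^ 2) (2⁻¹ * ‖y‖ ^ 2) := by
  rcases eq_or_ne x 0 with rfl | hx
  · simp [he]
  rcases eq_or_ne y 0 with rfl | hy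
  · simp
  rw [Padic.add_eq_max_of_ne] <;> rw [norm_pow, norm_mul, norm_pow, he]
  -- `‖x‖²` is an even power of `2` and `‖y‖² / 2` an odd one.
  rw [Padic.norm_eq_zpow_neg_valuation hx, Padic.norm_eq_zpow_neg_valuation hy]
  intro h
  have h' : (2 : ℝ) ^ (-x.valuation * 2) = (2 : ℝ) ^ (-1 + -y.valuation * 2) := by
    rw [zpow_add₀ two_ne_zero, zpow_mul, zpow_mul, zpow_neg_one]
    exact_mod_cast h
  have := zpow_right_injective₀ (by norm_num : (0 : ℝ) < 2) (by norm_num) h'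
  omega

lemma Padic.norm_sq_add_mul_sq_le_one_iff {e : ℚ_[2]} (he : ‖e‖ = 2⁻¹) {x y : ℚ_[2]} :
    ‖x ^ 2 + e * y ^ 2‖ ≤ 1 ↔ ‖x‖ ≤ 1 ∧ ‖y‖ ≤ 1 := by
  rw [Padic.norm_sq_add_mul_sq he, max_le_iff,
    pow_le_one_iff_of_nonneg (norm_nonneg x) two_ne_zero]
  refine and_congr_right' ⟨fun hy => ?_, fun hy => by nlinarith [norm_nonneg y]⟩
  have := Padic.norm_le_pow_iff_norm_lt_pow_add_one y 0
  norm_num at this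
  exact this.mpr (by nlinarith [norm_nonneg y])

lemma Padic.sq_ne_neg_two (r : ℚ_[2]) : r ^ 2 ≠ -2 := by
  intro h
  have := Padic.norm_sq_add_mul_sq Padic.norm_two_s10 r 1
  rw [h] at this
  norm_num at this
  exact absurd this (lt_max_of_lt_right one_half_pos).ne

section Coordinates

variable {F L : Type*} [Field F] [Ring L] [Nontrivial L] [Algebra F L] {α : L}

lemma linearIndependent_one_of_forall_algebraMap_ne (hα : ∀ a : F, algebraMap F L a ≠ α) :
    LinearIndependent F ![1, α] :=
  (LinearIndependent.pair_iff' one_ne_zero).mpr fun a => by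
    simpa [Algebra.algebraMap_eq_smul_one] using hα a

lemma eq_zero_of_algebraMap_add_algebraMap_mul_eq_zero (hα : ∀ a : F, algebraMap F L a ≠ α)
    {a b : F} (h : algebraMap F L a + algebraMap F L b * α = 0) : a = 0 ∧ b = 0 :=
  (LinearIndependent.pair_iff (R := F) (x := 1) (y := α)).mp
    (linearIndependent_one_of_forall_algebraMap_ne hα) a b <| by
      rwa [Algebra.smul_def, Algebra.smul_def, mul_one]

lemma exists_eq_algebraMap_add_algebraMap_mul (hdim : Module.finrank F L = 2)
    (hα : ∀ a : F, algebraMap F L a ≠ α) (x : L) :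
    ∃ a b : F, x = algebraMap F L a + algebraMap F L b * α := by
  have : FiniteDimensional F L := Module.finite_of_finrank_eq_succ hdim
  have hspan := (linearIndependent_one_of_forall_algebraMap_ne hα).span_eq_top_of_card_eq_finrank'
    (by simp [hdim])
  have hx : x ∈ Submodule.span F (Set.range ![1, α]) := hspan ▸ Submodule.mem_top
  rw [Matrix.range_cons_cons_empty] at hx
  obtain ⟨a, b, h⟩ := Submodule.mem_span_pair.mp hx
  exact ⟨a, b, by rw [← h, Algebra.smul_def, Algebra.smul_def, mul_one]⟩

end Coordinates

section SqrtNegTwo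

variable {F L : Type*} [CommRing F] [CommRing L] [Algebra F L] {α : L}

local notation "φ" => algebraMap F L

lemma quartic_coords (hα : α ^ 2 = -2) (s a b c d : F) :
    (φ c + φ d * α) ^ 2 + 1 - φ s * (φ a + φ b * α) ^ 2 + (φ a + φ b * α) ^ 4 =
      φ (c ^ 2 - 2 * d ^ 2 + 1 - s * (a ^ 2 - 2 * b ^ 2) + (a ^ 2 - 2 * b ^ 2) ^ 2
          - 8 * a ^ 2 * b ^ 2) +
        φ (2 * c * d - 2 * s * a * b + 4 * a * b * (a ^ 2 - 2 * b ^ 2)) * α := by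
  simp only [map_add, map_sub, map_mul, map_pow, map_one, map_ofNat]
  -- The coefficient is the quotient of the difference of the two sides by `α ^ 2 + 2`.
  linear_combination (φ d ^ 2 - φ s * φ b ^ 2 + 4 * φ a ^ 2 * φ b ^ 2 +
    2 * (φ a ^ 2 - 2 * φ b ^ 2 + 2 * φ a * φ b * α) * φ b ^ 2 + φ b ^ 4 * (α ^ 2 + 2)) * hα

lemma mul_conj_eq (hα : α ^ 2 = -2) (a b : F) :
    (φ a + φ b * α) * (φ a - φ b * α) = φ (a ^ 2 + 2 * b ^ 2) := by
  simp only [map_add, map_mul, map_pow, map_ofNat]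
  linear_combination (-φ b ^ 2) * hα

end SqrtNegTwo

lemma quartic_inv_eq_zero {K : Type*} [Field K] {s z w : K} (hz : z ≠ 0)
    (H : w ^ 2 + 1 - s * z ^ 2 + z ^ 4 = 0) :
    (w * z⁻¹ ^ 2) ^ 2 + 1 - s * z⁻¹ ^ 2 + z⁻¹ ^ 4 = 0 := by
  field_simp
  linear_combination H

section TwoAdic

variable {L : Type*} [Field L] [Algebra ℚ_[2] L] {α : L}

local notation "φ" => algebraMap ℚ_[2] L

lemma algebraMap_ne_of_sq_eq_neg_two (hα : α ^ 2 = -2) (a : ℚ_[2]) : φ a ≠ α := fun h =>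
  Padic.sq_ne_neg_two a <| (algebraMap ℚ_[2] L).injective <| by
    rw [map_pow, h, hα, map_neg, map_ofNat]

variable (α) in
def padicIntLattice : Set L := {x | ∃ a b : ℤ_[2], x = φ a + φ b * α}

lemma mem_padicIntLattice_or_inv_mem (hdim : Module.finrank ℚ_[2] L = 2) (hα : α ^ 2 = -2)
    (x : L) : x ∈ padicIntLattice α ∨ x⁻¹ ∈ padicIntLattice α := by
  obtain ⟨a, b, rfl⟩ :=
    exists_eq_algebraMap_add_algebraMap_mul hdim (algebraMap_ne_of_sq_eq_neg_two hα) x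
  by_cases hab : ‖a‖ ≤ 1 ∧ ‖b‖ ≤ 1
  · exact Or.inl ⟨⟨a, hab.1⟩, ⟨b, hab.2⟩, rfl⟩
  set N := a ^ 2 + 2 * b ^ 2 with hN
  have hN1 : 1 < ‖N‖ :=
    lt_of_not_ge fun h => hab ((Padic.norm_sq_add_mul_sq_le_one_iff Padic.norm_two_s10).mp h)
  have hN0 : N ≠ 0 := norm_pos_iff.mp (one_pos.trans hN1)
  have hinv : (a / N) ^ 2 + 2 * (-b / N) ^ 2 = N⁻¹ := by
    field_simp
    exact hN.symm
  obtain ⟨ha', hb'⟩ := (Padic.norm_sq_add_mul_sq_le_one_iff Padic.norm_two_s10).mp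
    (by rw [hinv, norm_inv]; exact inv_le_one_of_one_le₀ hN1.le)
  refine Or.inr ⟨⟨a / N, ha'⟩, ⟨-b / N, hb'⟩, inv_eq_of_mul_eq_one_right ?_⟩
  have hφN : φ N * φ N⁻¹ = 1 := by rw [← map_mul, mul_inv_cancel₀ hN0, map_one]
  calc (φ a + φ b * α) * (φ (a / N) + φ (-b / N) * α)
      = (φ a + φ b * α) * (φ a - φ b * α) * φ N⁻¹ := by
        simp only [div_eq_mul_inv, neg_mul, map_mul, map_neg]; ring
    _ = 1 := by rw [mul_conj_eq hα, hφN]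

-- Modulo `8` there are still solutions, with `a`, `b`, `d` odd and `c` even.
lemma quartic_coords_ne_zero_zmod_sixteen : ∀ a b c d : ZMod 16,
    c ^ 2 - 2 * d ^ 2 + 1 - 12 * (a ^ 2 - 2 * b ^ 2) + (a ^ 2 - 2 * b ^ 2) ^ 2
      - 8 * a ^ 2 * b ^ 2 = 0 →
    2 * c * d - 2 * 12 * a * b + 4 * a * b * (a ^ 2 - 2 * b ^ 2) ≠ 0 := by
  decide +kernel

lemma quartic_coords_ne_zero_padicInt {s a b c d : ℤ_[2]} (hs : PadicInt.toZModPow 4 s = 12)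
    (h₁ : c ^ 2 - 2 * d ^ 2 + 1 - s * (a ^ 2 - 2 * b ^ 2) + (a ^ 2 - 2 * b ^ 2) ^ 2
      - 8 * a ^ 2 * b ^ 2 = 0) :
    2 * c * d - 2 * s * a * b + 4 * a * b * (a ^ 2 - 2 * b ^ 2) ≠ 0 := by
  intro h₂
  replace h₁ := congrArg (PadicInt.toZModPow 4) h₁
  replace h₂ := congrArg (PadicInt.toZModPow 4) h₂
  simp only [map_add, map_sub, map_mul, map_pow, map_one, map_ofNat, map_zero, hs] at h₁ h₂
  exact quartic_coords_ne_zero_zmod_sixteen _ _ _ _ h₁ h₂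

lemma quartic_ne_zero_of_mem_padicIntLattice (hdim : Module.finrank ℚ_[2] L = 2)
    (hα : α ^ 2 = -2) {s : ℕ} (hs : (s : ZMod 16) = 12) {z : L} (hz : z ∈ padicIntLattice α)
    (w : L) : w ^ 2 + 1 - s * z ^ 2 + z ^ 4 ≠ 0 := by
  have hα' := algebraMap_ne_of_sq_eq_neg_two hα
  obtain ⟨a, b, rfl⟩ := hz
  obtain ⟨c, d, rfl⟩ := exists_eq_algebraMap_add_algebraMap_mul hdim hα' w
  rw [← map_natCast φ s, quartic_coords hα]
  intro H
  obtain ⟨h₁, h₂⟩ := eq_zero_of_algebraMap_add_algebraMap_mul_eq_zero hα' H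
  have hcd : ‖c‖ ≤ 1 ∧ ‖d‖ ≤ 1 := by
    refine (Padic.norm_sq_add_mul_sq_le_one_iff (e := -2)
      (by rw [norm_neg, Padic.norm_two_s10])).mp ?_
    have : c ^ 2 + -2 * d ^ 2 = ((-(1 - s * (a ^ 2 - 2 * b ^ 2) + (a ^ 2 - 2 * b ^ 2) ^ 2
        - 8 * a ^ 2 * b ^ 2) : ℤ_[2]) : ℚ_[2]) := by
      push_cast
      linear_combination h₁
    exact this ▸ PadicInt.norm_le_one _
  obtain ⟨C, rfl⟩ : ∃ C : ℤ_[2], (C : ℚ_[2]) = c := ⟨⟨c, hcd.1⟩, rfl⟩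
  obtain ⟨D, rfl⟩ : ∃ D : ℤ_[2], (D : ℚ_[2]) = d := ⟨⟨d, hcd.2⟩, rfl⟩
  exact quartic_coords_ne_zero_padicInt (s := s) (a := a) (b := b) (c := C) (d := D)
    (by rw [map_natCast]; exact hs) (PadicInt.coe_eq_zero.mp (by exact_mod_cast h₁))
    (PadicInt.coe_eq_zero.mp (by exact_mod_cast h₂))

end TwoAdic

theorem stmt_10_general (p q : ℕ)
    (hpq : q = p + 2) (hp5 : p % 8 = 5)
    (L : Type*) [Field L] [Algebra ℚ_[2] L] (hdim : Module.finrank ℚ_[2] L = 2)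
    (α : L) (hα : α ^ 2 = -2) :
    ¬ ∃ z w : L, w ^ 2 + 1 - ((p : L) + (q : L)) * z ^ 2 + z ^ 4 = 0 := by
  rintro ⟨z, w, H⟩
  have hs : ((p + q : ℕ) : ZMod 16) = 12 := by
    rw [← ZMod.natCast_mod, show (p + q) % 16 = 12 by omega]
    rfl
  rw [← Nat.cast_add] at H
  by_cases hz : z ∈ padicIntLattice α
  · exact quartic_ne_zero_of_mem_padicIntLattice hdim hα hs hz w H
  · have hz0 : z ≠ 0 := by
      rintro rfl
      exact hz ⟨0, 0, by simp⟩
    exact quartic_ne_zero_of_mem_padicIntLattice hdim hα hs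
      ((mem_padicIntLattice_or_inv_mem hdim hα z).resolve_left hz) _
      (quartic_inv_eq_zero hz0 H)

/-- Let `p` and `q` be odd primes with `q = p + 2` and `p ≡ 5 (mod 8)`. Let `L` be a field
which is a `ℚ₂`-algebra of dimension 2 over `ℚ₂`, and `α ∈ L` with `α² = -2`. Then there
are no `z, w ∈ L` with `w² + 1 - (p+q)z² + z⁴ = 0`. -/
theorem stmt_10 (p q : ℕ) (hp : p.Prime) (hq : q.Prime) (hpo : Odd p) (hqo : Odd q)
    (hpq : q = p + 2) (hp5 : p % 8 = 5)
    (L : Type*) [Field L] [Algebra ℚ_[2] L] (hdim : Module.finrank ℚ_[2] L = 2)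
    (α : L) (hα : α ^ 2 = -2) :
    ¬ ∃ z w : L, w ^ 2 + 1 - ((p : L) + (q : L)) * z ^ 2 + z ^ 4 = 0 :=
  stmt_10_general p q hpq hp5 L hdim α hα
end

section
/- Let p and q be odd prime numbers with q = p + 2 and p ≡ 5 (mod 8). Then there exist z, w ∈ ℚ_p with w² + 1 + (p+q)z² + z⁴ = 0. -/
/-!
The point `z = 0` lies on the curve as soon as `-1` is a square in `ℚ_p`. Since `p ≡ 1 (mod 4)`,
`-1` is a square modulo `p`, and as `p` is odd this square root is a simple root of `X² + 1`
modulo `p`, so it lifts to `ℤ_p` because `ℤ_p` is Henselian.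
-/

open Polynomial IsLocalRing

universe u

theorem HenselianLocalRing.of_henselianRing_maximalIdeal (R : Type*) [CommRing R] [IsLocalRing R]
    [HenselianRing R (maximalIdeal R)] : HenselianLocalRing R where
  is_henselian f hf a₀ h₁ h₂ :=
    HenselianRing.is_henselian f hf a₀ h₁ (h₂.map (Ideal.Quotient.mk (maximalIdeal R)))

instance (p : ℕ) [Fact p.Prime] : HenselianLocalRing ℤ_[p] :=
  .of_henselianRing_maximalIdeal ℤ_[p]

theorem HenselianLocalRing.isSquare_of_isSquare_map {R K : Type u} [CommRing R]
    [HenselianLocalRing R] [Field K] (φ : R →+* K) (hφ : Function.Surjective φ)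
    (h2 : (2 : K) ≠ 0) {a : R} (ha : φ a ≠ 0) (hsq : IsSquare (φ a)) : IsSquare a := by
  obtain ⟨c, hc⟩ := hsq
  have hc0 : c ≠ 0 := by rintro rfl; simp_all
  have hderiv : (X ^ 2 - C a).derivative.eval₂ φ c = 2 * c := by
    simp only [derivative_sub, derivative_X_pow, derivative_C, sub_zero, eval₂_mul, eval₂_X_pow,
      map_natCast]
    norm_num
  have lift_root := ((HenselianLocalRing.TFAE R).out 0 2).mp ‹_›
  obtain ⟨b, hb, -⟩ := lift_root φ hφ (X ^ 2 - C a)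
    (monic_X_pow_sub_C a two_ne_zero) c (by simp [hc, sq]) (hderiv ▸ mul_ne_zero h2 hc0)
  exact ⟨b, by simpa [sub_eq_zero, sq, eq_comm] using hb⟩

theorem PadicInt.isSquare_neg_one {p : ℕ} [Fact p.Prime] (hp : p % 4 = 1) :
    IsSquare (-1 : ℤ_[p]) := by
  have h2 : (2 : ZMod p) ≠ 0 := by
    intro h
    have := (ZMod.natCast_eq_zero_iff 2 p).mp (by exact_mod_cast h)
    have := Nat.le_of_dvd two_pos this
    have := (Fact.out : p.Prime).two_le
    omega
  refine HenselianLocalRing.isSquare_of_isSquare_map PadicInt.toZMod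
    (ZMod.ringHom_surjective _) h2 (by simp) ?_
  rw [map_neg, map_one, ZMod.exists_sq_eq_neg_one_iff]
  omega

theorem stmt_11_general (p q : ℕ) [Fact p.Prime] (hp5 : p % 8 = 5) :
    ∃ z w : ℚ_[p], w ^ 2 + 1 + ((p : ℚ_[p]) + (q : ℚ_[p])) * z ^ 2 + z ^ 4 = 0 := by
  obtain ⟨w, hw⟩ := (PadicInt.isSquare_neg_one (p := p) (by omega)).map PadicInt.Coe.ringHom
  refine ⟨0, w, ?_⟩
  simp [sq, ← hw]

/-- Let `p` and `q` be odd primes with `q = p + 2` and `p ≡ 5 (mod 8)`. Then there exist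
`z, w ∈ ℚ_p` with `w² + 1 + (p+q)z² + z⁴ = 0`. -/
theorem stmt_11 (p q : ℕ) [Fact p.Prime] (hq : q.Prime) (hpo : Odd p) (hqo : Odd q)
    (hpq : q = p + 2) (hp5 : p % 8 = 5) :
    ∃ z w : ℚ_[p], w ^ 2 + 1 + ((p : ℚ_[p]) + (q : ℚ_[p])) * z ^ 2 + z ^ 4 = 0 :=
  stmt_11_general p q hp5
end

section
/- Let p and q be odd prime numbers with q = p + 2 and p ≡ 5 (mod 8). Let L be a field equipped with a ℚ₂-algebra structure and let α ∈ L satisfy α² = -2. Then there exist z, w ∈ L with w² + 1 + (p+q)z² + z⁴ = 0. -/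
/-!
Take `z = 1 + α`, so that `z² = -1 + 2α` and `1 + (2p + 2)z² + z⁴ = -(2p + 8) + 4pα`.
For `w = gα - 2p/g` one has `w² = -2g² + 4p²/g² - 4pα`, so the equation holds as soon as
`g ≠ 0` and `g⁴ + (p + 4)g² - 2p² = 0`. Such a `g` exists already in `ℤ₂` by Hensel's lemma
at `g = 1`: for `p = 8m + 5` the quartic takes the value `-8(16m² + 19m + 5)` there, while
its derivative `2(p + 6)` has norm exactly `1/2`.
-/

open Polynomial in
theorem exists_padicInt_quartic_root {P : ℤ} (hP : P % 8 = 5) :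
    ∃ g : ℤ_[2], g ≠ 0 ∧ g ^ 4 + (P + 4) * g ^ 2 - 2 * P ^ 2 = 0 := by
  set F : ℤ[X] := X ^ 4 + C (P + 4) * X ^ 2 - C (2 * P ^ 2)
  have hF : ∀ z : ℤ_[2], F.aeval z = z ^ 4 + (P + 4) * z ^ 2 - 2 * P ^ 2 := by
    intro z
    simp [F, map_ofNat]
  have hF' : ∀ z : ℤ_[2], F.derivative.aeval z = 4 * z ^ 3 + (P + 4) * (2 * z) := by
    intro z
    simp [F, derivative_pow, map_ofNat]
  obtain ⟨m, rfl⟩ : ∃ m, P = 8 * m + 5 := ⟨P / 8, by omega⟩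
  have hF_one : F.aeval 1 = ((2 ^ 3 * -(16 * m ^ 2 + 19 * m + 5) : ℤ) : ℤ_[2]) := by
    rw [hF]
    push_cast
    ring
  have hF'_one : F.derivative.aeval 1 = ((2 * (8 * m + 11) : ℤ) : ℤ_[2]) := by
    rw [hF']
    push_cast
    ring
  have hnorm : ‖F.aeval (1 : ℤ_[2])‖ < ‖F.derivative.aeval (1 : ℤ_[2])‖ ^ 2 := by
    have hF_one_le : ‖F.aeval (1 : ℤ_[2])‖ ≤ ((2 : ℕ) : ℝ) ^ (-(3 : ℕ) : ℤ) := by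
      rw [hF_one, PadicInt.norm_int_le_pow_iff_dvd]
      exact dvd_mul_right _ _
    have hF'_one_gt :
        ¬ ‖F.derivative.aeval (1 : ℤ_[2])‖ ≤ ((2 : ℕ) : ℝ) ^ (-(2 : ℕ) : ℤ) := by
      rw [hF'_one, PadicInt.norm_int_le_pow_iff_dvd]
      omega
    rw [PadicInt.norm_le_pow_iff_norm_lt_pow_add_one] at hF'_one_gt
    norm_num at hF_one_le hF'_one_gt
    nlinarith
  obtain ⟨g, hg, hg_near_one, -⟩ := hensels_lemma hnorm
  refine ⟨g, ?_, by rwa [hF] at hg⟩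
  rintro rfl
  simp only [zero_sub, norm_neg, norm_one] at hg_near_one
  linarith [PadicInt.norm_le_one (F.derivative.aeval (1 : ℤ_[2]))]

theorem quartic_eq_zero_at_one_add_sqrt_neg_two {K : Type*} [Field K] {P g α : K}
    (hα : α ^ 2 = -2) (hg : g ≠ 0) (hroot : g ^ 4 + (P + 4) * g ^ 2 - 2 * P ^ 2 = 0) :
    (g * α - 2 * P / g) ^ 2 + 1 + (2 * P + 2) * (1 + α) ^ 2 + (1 + α) ^ 4 = 0 := by
  field_simp
  linear_combination (g ^ 2 * (g ^ 2 + 2 * P + 4 + 4 * α + (α ^ 2 + 2))) * hα - 2 * hroot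

theorem stmt_13_general (p q : ℕ)
    (hpq : q = p + 2) (hp5 : p % 8 = 5)
    (L : Type*) [Field L] [Algebra ℚ_[2] L] (α : L) (hα : α ^ 2 = -2) :
    ∃ z w : L, w ^ 2 + 1 + ((p : L) + (q : L)) * z ^ 2 + z ^ 4 = 0 := by
  obtain ⟨g, hg0, hg⟩ := exists_padicInt_quartic_root (P := p) (by omega)
  let f : ℤ_[2] →+* L := (algebraMap ℚ_[2] L).comp PadicInt.Coe.ringHom
  have hfg0 : f g ≠ 0 := (map_ne_zero (algebraMap ℚ_[2] L)).mpr (PadicInt.coe_ne_zero.mpr hg0)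
  have hfg : f g ^ 4 + (p + 4) * f g ^ 2 - 2 * p ^ 2 = 0 := by
    simpa only [map_add, map_sub, map_mul, map_pow, map_ofNat, map_natCast, Int.cast_natCast,
      map_zero] using congrArg f hg
  refine ⟨1 + α, f g * α - 2 * p / f g, ?_⟩
  convert quartic_eq_zero_at_one_add_sqrt_neg_two hα hfg0 hfg using 3
  rw [hpq]
  push_cast
  ring

/-- Let `p` and `q` be odd primes with `q = p + 2` and `p ≡ 5 (mod 8)`. Let `L` be a field
which is a `ℚ₂`-algebra and `α ∈ L` with `α² = -2`. Then there exist `z, w ∈ L` with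
`w² + 1 + (p+q)z² + z⁴ = 0`. -/
theorem stmt_13 (p q : ℕ) (hp : p.Prime) (hq : q.Prime) (hpo : Odd p) (hqo : Odd q)
    (hpq : q = p + 2) (hp5 : p % 8 = 5)
    (L : Type*) [Field L] [Algebra ℚ_[2] L] (α : L) (hα : α ^ 2 = -2) :
    ∃ z w : L, w ^ 2 + 1 + ((p : L) + (q : L)) * z ^ 2 + z ^ 4 = 0 :=
  stmt_13_general p q hpq hp5 L α hα
end
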